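/- Let α₀ be a real number greater than 1 satisfying ∑_{k=1}^∞ k^{−α₀} = 2 (numerically α₀ ≈ 1.729). Then the Möbius function μ₁ of the floor quotient partial order satisfies |μ₁(d,n)| ≤ (n/d)^{α₀} for all positive integers d and n. -/

import Mathlib

/-!
Induct on `n`. If `d ≼₁ n` and `d ≠ n`, the defining recursion gives
`μ₁(d,n) = -∑ μ₁(d,e)` over the floor quotients `e ≠ n` of `n` with `d ≼₁ e`. Each such `e` is
`⌊n/k⌋` for some `k ≥ 2`, and distinct `e` come from distinct `k`; since `(e/d)^α ≤ (n/d)^α k^{-α}`,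
the induction hypothesis bounds `|μ₁(d,n)|` by `(n/d)^α ∑_{k ≥ 2} k^{-α} = (n/d)^α (ζ(α) - 1)`,
and `ζ(α₀) = 2` is exactly what makes this `(n/d)^α₀`.
-/

/-- `d` is a floor quotient of `n`: `d = ⌊n/k⌋` for some positive integer `k`. -/
def FloorQuotient (d n : ℕ) : Prop := ∃ k : ℕ, 0 < k ∧ d = n / k

namespace FloorQuotient

theorem refl (n : ℕ) : FloorQuotient n n := ⟨1, one_pos, (Nat.div_one n).symm⟩

theorem le {e n : ℕ} (h : FloorQuotient e n) : e ≤ n := by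
  obtain ⟨k, -, rfl⟩ := h
  exact Nat.div_le_self n k

theorem exists_pnat_ne_one {e n : ℕ} (h : FloorQuotient e n) (hne : e ≠ n) :
    ∃ k : ℕ+, k ≠ 1 ∧ e = n / k := by
  obtain ⟨k, hk, rfl⟩ := h
  refine ⟨⟨k, hk⟩, fun hk1 => hne ?_, rfl⟩
  obtain rfl : k = 1 := congrArg PNat.val hk1
  exact Nat.div_one n

end FloorQuotient

theorem sum_rpow_neg_le_one_of_tsum_eq_two {α : ℝ} (hzeta : ∑' k : ℕ+, (k : ℝ) ^ (-α) = 2)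
    {s : Finset ℕ+} (hs : 1 ∉ s) : ∑ k ∈ s, (k : ℝ) ^ (-α) ≤ 1 := by
  have hsummable : Summable fun k : ℕ+ => (k : ℝ) ^ (-α) := by
    by_contra h
    rw [tsum_eq_zero_of_not_summable h] at hzeta
    norm_num at hzeta
  have hle : ∑ k ∈ insert 1 s, (k : ℝ) ^ (-α) ≤ 2 :=
    hzeta ▸ hsummable.sum_le_tsum _ fun k _ => by positivity
  rw [Finset.sum_insert hs] at hle
  norm_num at hle
  linarith

theorem natCast_div_div_rpow_le {α : ℝ} (hα : 0 ≤ α) (n : ℕ) {k : ℕ} (hk : 0 < k) {d : ℝ}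
    (hd : 0 ≤ d) : (((n / k : ℕ) : ℝ) / d) ^ α ≤ ((n : ℝ) / d) ^ α * (k : ℝ) ^ (-α) := by
  have hk' : (0 : ℝ) < k := by exact_mod_cast hk
  calc (((n / k : ℕ) : ℝ) / d) ^ α ≤ ((n : ℝ) / d / k) ^ α := by
        rw [div_right_comm]
        gcongr ?_ ^ _
        exact div_le_div_of_nonneg_right Nat.cast_div_le hd
    _ = ((n : ℝ) / d) ^ α * (k : ℝ) ^ (-α) := by
        rw [Real.div_rpow (by positivity) hk'.le, Real.rpow_neg hk'.le, div_eq_mul_inv]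

theorem sum_div_rpow_le_of_forall_eq_div {α : ℝ} (hα : 0 ≤ α)
    (hzeta : ∑' k : ℕ+, (k : ℝ) ^ (-α) = 2) {n : ℕ} {d : ℝ} (hd : 0 ≤ d) {T : Finset ℕ}
    (hT : ∀ e ∈ T, ∃ k : ℕ+, k ≠ 1 ∧ e = n / k) :
    ∑ e ∈ T, ((e : ℝ) / d) ^ α ≤ ((n : ℝ) / d) ^ α := by
  choose! k hk1 hek using hT
  have hinj : Set.InjOn k T := fun e he e' he' h => by rw [hek e he, hek e' he', h]
  have hone : (1 : ℕ+) ∉ T.image k := by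
    simp only [Finset.mem_image, not_exists, not_and]
    exact fun e he h => hk1 e he h
  calc ∑ e ∈ T, ((e : ℝ) / d) ^ α ≤ ∑ e ∈ T, ((n : ℝ) / d) ^ α * ((k e : ℕ) : ℝ) ^ (-α) :=
        Finset.sum_le_sum fun e he => by
          simpa only [← hek e he] using natCast_div_div_rpow_le hα n (k e).pos hd
    _ = ((n : ℝ) / d) ^ α * ∑ j ∈ T.image k, (j : ℝ) ^ (-α) := by
        rw [Finset.sum_image hinj, Finset.mul_sum]
    _ ≤ ((n : ℝ) / d) ^ α * 1 := by
        gcongr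
        exact sum_rpow_neg_le_one_of_tsum_eq_two hzeta hone
    _ = ((n : ℝ) / d) ^ α := mul_one _

open scoped Classical in
theorem mobius_polynomial_upper_bound (α₀ : ℝ) (hα : 1 < α₀)
    (hzeta : ∑' k : ℕ+, (k : ℝ) ^ (-α₀) = 2)
    (μ₁ : ℕ → ℕ → ℤ)
    -- defining properties of the Möbius function of the floor quotient order
    (hrefl : ∀ d : ℕ, 0 < d → μ₁ d d = 1)
    (hzero : ∀ d n : ℕ, 0 < d → 0 < n → ¬ FloorQuotient d n → μ₁ d n = 0)
    (hrec : ∀ d n : ℕ, 0 < d → FloorQuotient d n → d ≠ n →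
      ∑ e ∈ (Finset.Icc d n).filter
        (fun e => FloorQuotient d e ∧ FloorQuotient e n), μ₁ d e = 0)
    (d n : ℕ) (hd : 0 < d) (hn : 0 < n) :
    (|μ₁ d n| : ℝ) ≤ ((n : ℝ) / d) ^ α₀ := by
  induction n using Nat.strong_induction_on with
  | _ n IH =>
  by_cases hdn : d = n
  · subst hdn
    simp [hrefl d hd, div_self (Nat.cast_ne_zero.mpr hd.ne' : (d : ℝ) ≠ 0)]
  by_cases hfq : FloorQuotient d n
  swap
  · simpa [hzero d n hd hn hfq] using Real.rpow_nonneg (by positivity : (0 : ℝ) ≤ n / d) α₀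
  set S := (Finset.Icc d n).filter fun e => FloorQuotient d e ∧ FloorQuotient e n
  have hnS : n ∈ S := by simp [S, hfq.le, hfq, FloorQuotient.refl]
  have hμ : μ₁ d n = -∑ e ∈ S.erase n, μ₁ d e := by
    linarith [Finset.add_sum_erase S (μ₁ d) hnS, hrec d n hd hfq hdn]
  have hT : ∀ e ∈ S.erase n, d ≤ e ∧ e < n ∧ ∃ k : ℕ+, k ≠ 1 ∧ e = n / k := by
    intro e he
    simp only [S, Finset.mem_erase, Finset.mem_filter, Finset.mem_Icc] at he
    obtain ⟨hen, ⟨hde, hle⟩, -, hfq'⟩ := he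
    exact ⟨hde, lt_of_le_of_ne hle hen, hfq'.exists_pnat_ne_one hen⟩
  calc (|μ₁ d n| : ℝ) ≤ ∑ e ∈ S.erase n, (|μ₁ d e| : ℝ) := by
        rw [hμ]; push_cast; rw [abs_neg]; exact Finset.abs_sum_le_sum_abs _ _
    _ ≤ ∑ e ∈ S.erase n, ((e : ℝ) / d) ^ α₀ := Finset.sum_le_sum fun e he =>
        IH e (hT e he).2.1 (hd.trans_le (hT e he).1)
    _ ≤ ((n : ℝ) / d) ^ α₀ := sum_div_rpow_le_of_forall_eq_div (by linarith) hzeta (Nat.cast_nonneg d)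
        fun e he => (hT e he).2.2
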